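/- arXiv:2103.08655 — 2 statements merged into one kernel-verified Lean document; each statement's English description precedes it below -/
import Mathlib

section
/- The category of pastures has all colimits of diagrams indexed by a small category: for every small category J and every functor F from J to the category of pastures, a colimit of F exists. -/
universe u v w

/-- A pasture structure on a type `P`: a multiplication, a zero, a one,
an involution `neg`, and a ternary nullset relation `null a b c`
(meaning "`a + b + c = 0`"). -/
structure PastureStr (P : Type u) where
  mul : P → P → P
  zero : P
  one : P
  neg : P → P
  null : P → P → P → Prop

/-- `P` together with a `PastureStr` is a pasture: `P` is a commutative
monoid with zero whose nonzero elements form an abelian group, `neg` is an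
involution fixing `0`, and the nullset is invariant under permutations,
invariant under multiplication, and satisfies `a + b + 0 = 0 ↔ a = -b`. -/
structure PastureStr.IsPasture {P : Type u} (S : PastureStr P) : Prop where
  mul_comm : ∀ a b : P, S.mul a b = S.mul b a
  mul_assoc : ∀ a b c : P, S.mul (S.mul a b) c = S.mul a (S.mul b c)
  one_mul : ∀ a : P, S.mul S.one a = a
  zero_mul : ∀ a : P, S.mul S.zero a = S.zero
  one_ne_zero : S.one ≠ S.zero
  mul_ne_zero : ∀ a b : P, a ≠ S.zero → b ≠ S.zero → S.mul a b ≠ S.zero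
  exists_inv : ∀ a : P, a ≠ S.zero → ∃ b : P, S.mul a b = S.one
  neg_neg : ∀ a : P, S.neg (S.neg a) = a
  neg_zero : S.neg S.zero = S.zero
  null_swap_left : ∀ a b c : P, S.null a b c → S.null b a c
  null_swap_right : ∀ a b c : P, S.null a b c → S.null a c b
  null_mul : ∀ d a b c : P, S.null a b c → S.null (S.mul d a) (S.mul d b) (S.mul d c)
  null_zero : ∀ a b : P, S.null a b S.zero ↔ a = S.neg b

/-- A morphism of pastures: a multiplicative map preserving `0`, `1`,
the involution and the nullset. -/
structure PastureStr.IsHom {P : Type u} {P' : Type v} (S : PastureStr P) (T : PastureStr P')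
    (f : P → P') : Prop where
  map_mul : ∀ a b : P, f (S.mul a b) = T.mul (f a) (f b)
  map_zero : f S.zero = T.zero
  map_one : f S.one = T.one
  map_neg : ∀ a : P, f (S.neg a) = T.neg (f a)
  map_null : ∀ a b c : P, S.null a b c → T.null (f a) (f b) (f c)

/-- A bundled pasture: a carrier with a pasture structure satisfying the axioms. -/
structure Pasture : Type (u + 1) where
  carrier : Type u
  str : PastureStr carrier
  isPasture : str.IsPasture

/-- A morphism between bundled pastures. -/
structure PastureHom (A B : Pasture.{u}) : Type u where
  toFun : A.carrier → B.carrier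
  isHom : PastureStr.IsHom A.str B.str toFun

theorem PastureHom.ext' {A B : Pasture.{u}} {f g : PastureHom A B}
    (h : f.toFun = g.toFun) : f = g := by
  cases f; cases g; cases h; rfl

theorem PastureStr.IsHom.id' {P : Type u} (S : PastureStr P) :
    S.IsHom S (fun x => x) :=
  ⟨fun _ _ => rfl, rfl, rfl, fun _ => rfl, fun _ _ _ h => h⟩

theorem PastureStr.IsHom.comp' {P : Type u} {Q : Type v} {R : Type w}
    {S : PastureStr P} {T : PastureStr Q} {U : PastureStr R}
    {f : P → Q} {g : Q → R} (hf : S.IsHom T f) (hg : T.IsHom U g) :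
    S.IsHom U (fun x => g (f x)) where
  map_mul a b := by
    show g (f (S.mul a b)) = U.mul (g (f a)) (g (f b))
    rw [hf.map_mul, hg.map_mul]
  map_zero := by
    show g (f S.zero) = U.zero
    rw [hf.map_zero, hg.map_zero]
  map_one := by
    show g (f S.one) = U.one
    rw [hf.map_one, hg.map_one]
  map_neg a := by
    show g (f (S.neg a)) = U.neg (g (f a))
    rw [hf.map_neg, hg.map_neg]
  map_null a b c h := hg.map_null _ _ _ (hf.map_null _ _ _ h)

/-- The category of pastures, with morphisms of pastures as morphisms and
composition of functions as composition. -/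
instance : CategoryTheory.Category Pasture.{u} where
  Hom A B := PastureHom A B
  id A := ⟨fun x => x, PastureStr.IsHom.id' A.str⟩
  comp f g := ⟨fun x => g.toFun (f.toFun x), f.isHom.comp' g.isHom⟩
  id_comp _ := PastureHom.ext' rfl
  comp_id _ := PastureHom.ext' rfl
  assoc _ _ _ := PastureHom.ext' rfl

/-!
The colimit is the quotient of the formal expressions in the elements of the `F j` (built with
`1`, `0`, `-` and `·`) by the laws of a commutative monoid with zero with an involution satisfying
`a * (-b) = -(a * b)`, and by the relations making the insertions `of j` into compatible
homomorphisms. Its nullset is generated by the scaled images of the nullsets of the `F j`,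
together with the triples `(a, -a, 0)` that axiom (3) forces.

Two facts are not formal. Every element is `0` or a unit, by induction on expressions. And the
insertions reflect `0` (which gives `1 ≠ 0` and axiom (3)): every pasture maps to the Krasner
hyperfield by sending exactly its nonzero elements to `1`, and these maps assemble to a map out
of the colimit that detects `0`.
-/

open CategoryTheory Limits

universe w'

namespace PastureStr

variable {P : Type u} {S : PastureStr P}

theorem IsPasture.mul_zero (hS : S.IsPasture) (a : P) : S.mul a S.zero = S.zero := by
  rw [hS.mul_comm, hS.zero_mul]

theorem IsPasture.mul_neg (hS : S.IsPasture) (a b : P) :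
    S.mul a (S.neg b) = S.neg (S.mul a b) := by
  have h := hS.null_mul a _ _ _ ((hS.null_zero (S.neg b) b).2 rfl)
  rwa [hS.mul_zero, hS.null_zero] at h

theorem IsPasture.neg_eq_zero_iff (hS : S.IsPasture) {a : P} : S.neg a = S.zero ↔ a = S.zero :=
  ⟨fun h => by rw [← hS.neg_neg a, h, hS.neg_zero], fun h => by rw [h, hS.neg_zero]⟩

theorem IsPasture.eq_zero_of_null_zero_zero (hS : S.IsPasture) {a : P}
    (h : S.null a S.zero S.zero) : a = S.zero := by
  rwa [hS.null_zero, hS.neg_zero] at h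

theorem IsHom.map_eq_zero_iff {Q : Type v} {T : PastureStr Q} {f : P → Q} (hS : S.IsPasture)
    (hT : T.IsPasture) (hf : S.IsHom T f) {a : P} : f a = T.zero ↔ a = S.zero := by
  refine ⟨fun ha => by_contra fun ha' => hT.one_ne_zero ?_, fun ha => ha ▸ hf.map_zero⟩
  obtain ⟨b, hb⟩ := hS.exists_inv a ha'
  rw [← hf.map_one, ← hb, hf.map_mul, ha, hT.zero_mul]

/-- The Krasner hyperfield `𝕂 = {0, 1}`, in which `a + b + c = 0` unless exactly one of
`a, b, c` is `1`. -/
def krasner : PastureStr Bool where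
  mul := and
  zero := false
  one := true
  neg := id
  null a b c := a.toNat + b.toNat + c.toNat ≠ 1

theorem isPasture_krasner : krasner.IsPasture := by
  constructor <;> dsimp only [krasner] <;> decide

open scoped Classical in
theorem IsPasture.isHom_krasner (hS : S.IsPasture) :
    S.IsHom krasner (fun a => decide (a ≠ S.zero)) where
  map_mul a b := by
    by_cases ha : a = S.zero
    · simp [krasner, ha, hS.zero_mul]
    by_cases hb : b = S.zero
    · simp [krasner, hb, hS.mul_zero]
    simp [krasner, ha, hb, hS.mul_ne_zero a b ha hb]
  map_zero := by simp [krasner]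
  map_one := by simp [krasner, hS.one_ne_zero]
  map_neg a := by simp [krasner, hS.neg_eq_zero_iff]
  map_null a b c h := by
    have ha (hb : b = S.zero) (hc : c = S.zero) : a = S.zero :=
      hS.eq_zero_of_null_zero_zero (by rwa [hb, hc] at h)
    have hb (ha : a = S.zero) (hc : c = S.zero) : b = S.zero :=
      hS.eq_zero_of_null_zero_zero (by rw [ha, hc] at h; exact hS.null_swap_left _ _ _ h)
    have hc (ha : a = S.zero) (hb : b = S.zero) : c = S.zero :=
      hS.eq_zero_of_null_zero_zero (by
        rw [ha, hb] at h; exact hS.null_swap_left _ _ _ (hS.null_swap_right _ _ _ h))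
    by_cases a = S.zero <;> by_cases b = S.zero <;> by_cases c = S.zero <;> simp_all [krasner]

end PastureStr

namespace PastureColimit

open PastureStr

variable {J : Type v} [Category.{w} J] (F : J ⥤ Pasture.{max u v})

inductive Word : Type (max u v)
  | of (j : J) (x : (F.obj j).carrier)
  | one
  | zero
  | neg (w : Word)
  | mul (w w' : Word)

inductive Rel : Word F → Word F → Prop
  | map {j j' : J} (f : j ⟶ j') (x : (F.obj j).carrier) :
      Rel (.of j' ((F.map f).toFun x)) (.of j x)
  | of_mul (j : J) (x y : (F.obj j).carrier) :
      Rel (.of j ((F.obj j).str.mul x y)) (.mul (.of j x) (.of j y))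
  | of_one (j : J) : Rel (.of j (F.obj j).str.one) .one
  | of_zero (j : J) : Rel (.of j (F.obj j).str.zero) .zero
  | of_neg (j : J) (x : (F.obj j).carrier) : Rel (.of j ((F.obj j).str.neg x)) (.neg (.of j x))
  | mul_left {w w' : Word F} (w'' : Word F) : Rel w w' → Rel (.mul w w'') (.mul w' w'')
  | mul_right (w : Word F) {w' w'' : Word F} : Rel w' w'' → Rel (.mul w w') (.mul w w'')
  | neg {w w' : Word F} : Rel w w' → Rel (.neg w) (.neg w')
  | mul_comm (w w' : Word F) : Rel (.mul w w') (.mul w' w)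
  | mul_assoc (w w' w'' : Word F) : Rel (.mul (.mul w w') w'') (.mul w (.mul w' w''))
  | one_mul (w : Word F) : Rel (.mul .one w) w
  | zero_mul (w : Word F) : Rel (.mul .zero w) .zero
  | neg_neg (w : Word F) : Rel (.neg (.neg w)) w
  | mul_neg (w w' : Word F) : Rel (.mul w (.neg w')) (.neg (.mul w w'))

def Carrier : Type (max u v) := Quot (Rel F)

instance : One (Carrier F) := ⟨Quot.mk _ .one⟩

instance : Zero (Carrier F) := ⟨Quot.mk _ .zero⟩

instance : Neg (Carrier F) := ⟨Quot.map Word.neg fun _ _ => Rel.neg⟩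

instance : Mul (Carrier F) :=
  ⟨Quot.map₂ Word.mul (fun w _ _ => Rel.mul_right w) fun _ _ w => Rel.mul_left w⟩

def of (j : J) (x : (F.obj j).carrier) : Carrier F := Quot.mk _ (.of j x)

instance : CommMonoidWithZero (Carrier F) where
  mul_assoc a b c := Quot.induction_on₃ a b c fun _ _ _ => Quot.sound (Rel.mul_assoc _ _ _)
  one_mul a := Quot.induction_on a fun _ => Quot.sound (Rel.one_mul _)
  mul_one a := Quot.induction_on a fun _ =>
    (Quot.sound (Rel.mul_comm _ _)).trans (Quot.sound (Rel.one_mul _))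
  mul_comm a b := Quot.induction_on₂ a b fun _ _ => Quot.sound (Rel.mul_comm _ _)
  zero_mul a := Quot.induction_on a fun _ => Quot.sound (Rel.zero_mul _)
  mul_zero a := Quot.induction_on a fun _ =>
    (Quot.sound (Rel.mul_comm _ _)).trans (Quot.sound (Rel.zero_mul _))

instance : HasDistribNeg (Carrier F) where
  neg_neg a := Quot.induction_on a fun _ => Quot.sound (Rel.neg_neg _)
  mul_neg a b := Quot.induction_on₂ a b fun _ _ => Quot.sound (Rel.mul_neg _ _)
  neg_mul a b := Quot.induction_on₂ a b fun _ _ =>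
    (Quot.sound (Rel.mul_comm _ _)).trans <|
      (Quot.sound (Rel.mul_neg _ _)).trans (Quot.sound (Rel.neg (Rel.mul_comm _ _)))

variable {F}

@[elab_as_elim]
theorem Carrier.induction_on {motive : Carrier F → Prop} (a : Carrier F)
    (of : ∀ j x, motive (of F j x)) (one : motive 1) (zero : motive 0)
    (neg : ∀ a, motive a → motive (-a))
    (mul : ∀ a b, motive a → motive b → motive (a * b)) :
    motive a := by
  induction a using Quot.ind with | mk w => ?_
  induction w with
  | of j x => exact of j x
  | one => exact one
  | zero => exact zero
  | neg w ih => exact neg _ ih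
  | mul w w' ih ih' => exact mul _ _ ih ih'

theorem of_mul (j : J) (x y : (F.obj j).carrier) :
    of F j ((F.obj j).str.mul x y) = of F j x * of F j y :=
  Quot.sound (Rel.of_mul j x y)

theorem of_one (j : J) : of F j (F.obj j).str.one = 1 := Quot.sound (Rel.of_one j)

theorem of_zero (j : J) : of F j (F.obj j).str.zero = 0 := Quot.sound (Rel.of_zero j)

theorem of_neg (j : J) (x : (F.obj j).carrier) : of F j ((F.obj j).str.neg x) = -of F j x :=
  Quot.sound (Rel.of_neg j x)

theorem of_map {j j' : J} (f : j ⟶ j') (x : (F.obj j).carrier) :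
    of F j' ((F.map f).toFun x) = of F j x :=
  Quot.sound (Rel.map f x)

structure IsCompatible {P : Type w'} (T : PastureStr P) (g : ∀ j, (F.obj j).carrier → P) :
    Prop where
  isHom (j : J) : (F.obj j).str.IsHom T (g j)
  naturality {j j' : J} (f : j ⟶ j') (x : (F.obj j).carrier) : g j' ((F.map f).toFun x) = g j x

section Lift

variable {P : Type w'} {T : PastureStr P} {g : ∀ j, (F.obj j).carrier → P}

def Word.eval (T : PastureStr P) (g : ∀ j, (F.obj j).carrier → P) : Word F → P
  | .of j x => g j x
  | .one => T.one
  | .zero => T.zero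
  | .neg w => T.neg (w.eval T g)
  | .mul w w' => T.mul (w.eval T g) (w'.eval T g)

theorem Word.eval_eq_of_rel (hT : T.IsPasture) (hg : IsCompatible T g) {w w' : Word F}
    (h : Rel F w w') : w.eval T g = w'.eval T g := by
  induction h with
  | map f x => exact hg.naturality f x
  | of_mul j x y => exact (hg.isHom j).map_mul x y
  | of_one j => exact (hg.isHom j).map_one
  | of_zero j => exact (hg.isHom j).map_zero
  | of_neg j x => exact (hg.isHom j).map_neg x
  | mul_left _ _ ih => exact congrArg (T.mul · _) ih
  | mul_right _ _ ih => exact congrArg (T.mul _) ih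
  | neg _ ih => exact congrArg T.neg ih
  | mul_comm => exact hT.mul_comm _ _
  | mul_assoc => exact hT.mul_assoc _ _ _
  | one_mul => exact hT.one_mul _
  | zero_mul => exact hT.zero_mul _
  | neg_neg => exact hT.neg_neg _
  | mul_neg => exact hT.mul_neg _ _

def lift (hT : T.IsPasture) (hg : IsCompatible T g) : Carrier F → P :=
  Quot.lift (Word.eval T g) fun _ _ => Word.eval_eq_of_rel hT hg

variable (hT : T.IsPasture) (hg : IsCompatible T g)

@[simp]
theorem lift_of (j : J) (x : (F.obj j).carrier) : lift hT hg (of F j x) = g j x := rfl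

@[simp]
theorem lift_one : lift hT hg 1 = T.one := rfl

@[simp]
theorem lift_zero : lift hT hg 0 = T.zero := rfl

@[simp]
theorem lift_neg (a : Carrier F) : lift hT hg (-a) = T.neg (lift hT hg a) :=
  Quot.induction_on a fun _ => rfl

@[simp]
theorem lift_mul (a b : Carrier F) : lift hT hg (a * b) = T.mul (lift hT hg a) (lift hT hg b) :=
  Quot.induction_on₂ a b fun _ _ => rfl

end Lift

open scoped Classical in
theorem isCompatible_krasner :
    IsCompatible (F := F) krasner fun j x => decide (x ≠ (F.obj j).str.zero) where
  isHom j := (F.obj j).isPasture.isHom_krasner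
  naturality f x := by
    simp only [ne_eq,
      (F.map f).isHom.map_eq_zero_iff (F.obj _).isPasture (F.obj _).isPasture (a := x)]

theorem of_eq_zero_iff {j : J} {x : (F.obj j).carrier} :
    of F j x = 0 ↔ x = (F.obj j).str.zero := by
  classical
  refine ⟨fun h => ?_, fun h => h ▸ of_zero j⟩
  simpa [krasner] using congrArg (lift isPasture_krasner isCompatible_krasner) h

instance : Nontrivial (Carrier F) := by
  classical
  refine ⟨1, 0, fun h => ?_⟩
  simpa [krasner] using congrArg (lift isPasture_krasner isCompatible_krasner) h

theorem isUnit_or_eq_zero (a : Carrier F) : IsUnit a ∨ a = 0 := by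
  induction a using Carrier.induction_on with
  | of j x =>
    by_cases hx : x = (F.obj j).str.zero
    · exact .inr (hx ▸ of_zero j)
    obtain ⟨y, hy⟩ := (F.obj j).isPasture.exists_inv x hx
    exact .inl (IsUnit.of_mul_eq_one (of F j y) (by rw [← of_mul, hy, of_one]))
  | one => exact .inl isUnit_one
  | zero => exact .inr rfl
  | neg a ih => exact ih.imp IsUnit.neg fun h => by rw [h, neg_zero]
  | mul a b iha ihb =>
    rcases iha with ha | rfl
    · rcases ihb with hb | rfl
      · exact .inl (ha.mul hb)
      · exact .inr (mul_zero a)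
    · exact .inr (zero_mul b)

noncomputable instance : CommGroupWithZero (Carrier F) :=
  commGroupWithZeroOfIsUnitOrEqZero isUnit_or_eq_zero

variable (F) in
def Null (a b c : Carrier F) : Prop :=
  (∃ (d : Carrier F) (j : J) (x y z : (F.obj j).carrier), (F.obj j).str.null x y z ∧
      a = d * of F j x ∧ b = d * of F j y ∧ c = d * of F j z) ∨
    (c = 0 ∧ a = -b) ∨ (b = 0 ∧ a = -c) ∨ (a = 0 ∧ b = -c)

theorem Null.swap_left {a b c : Carrier F} : Null F a b c → Null F b a c := by
  rintro (⟨d, j, x, y, z, h, ha, hb, hc⟩ | ⟨hc, ha⟩ | ⟨hb, ha⟩ | ⟨ha, hb⟩)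
  · exact .inl ⟨d, j, y, x, z, (F.obj j).isPasture.null_swap_left x y z h, hb, ha, hc⟩
  · exact .inr (.inl ⟨hc, by rw [ha, neg_neg]⟩)
  · exact .inr (.inr (.inr ⟨hb, ha⟩))
  · exact .inr (.inr (.inl ⟨ha, hb⟩))

theorem Null.swap_right {a b c : Carrier F} : Null F a b c → Null F a c b := by
  rintro (⟨d, j, x, y, z, h, ha, hb, hc⟩ | ⟨hc, ha⟩ | ⟨hb, ha⟩ | ⟨ha, hb⟩)
  · exact .inl ⟨d, j, x, z, y, (F.obj j).isPasture.null_swap_right x y z h, ha, hc, hb⟩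
  · exact .inr (.inr (.inl ⟨hc, ha⟩))
  · exact .inr (.inl ⟨hb, ha⟩)
  · exact .inr (.inr (.inr ⟨ha, by rw [hb, neg_neg]⟩))

theorem Null.mul (e : Carrier F) {a b c : Carrier F} :
    Null F a b c → Null F (e * a) (e * b) (e * c) := by
  rintro (⟨d, j, x, y, z, h, rfl, rfl, rfl⟩ | ⟨rfl, rfl⟩ | ⟨rfl, rfl⟩ | ⟨rfl, rfl⟩)
  · exact .inl ⟨e * d, j, x, y, z, h, (mul_assoc ..).symm, (mul_assoc ..).symm,
    (mul_assoc ..).symm⟩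
  · exact .inr (.inl ⟨mul_zero e, mul_neg e b⟩)
  · exact .inr (.inr (.inl ⟨mul_zero e, mul_neg e c⟩))
  · exact .inr (.inr (.inr ⟨mul_zero e, mul_neg e c⟩))

theorem null_zero_iff {a b : Carrier F} : Null F a b 0 ↔ a = -b := by
  refine ⟨?_, fun h => .inr (.inl ⟨rfl, h⟩)⟩
  rintro (⟨d, j, x, y, z, h, rfl, rfl, hz⟩ | ⟨-, h⟩ | ⟨rfl, rfl⟩ | ⟨rfl, rfl⟩)
  · rcases eq_zero_or_eq_zero_of_mul_eq_zero hz.symm with rfl | hz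
    · simp
    rw [of_eq_zero_iff] at hz
    rw [hz, (F.obj j).isPasture.null_zero] at h
    rw [h, of_neg, mul_neg]
  · exact h
  · rw [neg_zero]
  · rw [neg_zero, neg_zero]

variable (F) in
def pastureStr : PastureStr (Carrier F) where
  mul := (· * ·)
  zero := 0
  one := 1
  neg := Neg.neg
  null := Null F

theorem isPasture : (pastureStr F).IsPasture where
  mul_comm := mul_comm
  mul_assoc := mul_assoc
  one_mul := one_mul
  zero_mul := zero_mul
  one_ne_zero := one_ne_zero
  mul_ne_zero _ _ := mul_ne_zero
  exists_inv a ha := ⟨a⁻¹, mul_inv_cancel₀ ha⟩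
  neg_neg := neg_neg
  neg_zero := neg_zero
  null_swap_left _ _ _ := Null.swap_left
  null_swap_right _ _ _ := Null.swap_right
  null_mul := Null.mul
  null_zero _ _ := null_zero_iff

variable (F) in
def pasture : Pasture.{max u v} := ⟨Carrier F, pastureStr F, isPasture⟩

theorem isHom_of (j : J) : (F.obj j).str.IsHom (pastureStr F) (of F j) where
  map_mul := of_mul j
  map_zero := of_zero j
  map_one := of_one j
  map_neg := of_neg j
  map_null x y z h :=
    .inl ⟨1, j, x, y, z, h, (one_mul _).symm, (one_mul _).symm, (one_mul _).symm⟩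

theorem isHom_lift {P : Type w'} {T : PastureStr P} {g : ∀ j, (F.obj j).carrier → P}
    (hT : T.IsPasture) (hg : IsCompatible T g) : (pastureStr F).IsHom T (lift hT hg) where
  map_mul := lift_mul hT hg
  map_zero := lift_zero hT hg
  map_one := lift_one hT hg
  map_neg := lift_neg hT hg
  map_null a b c := by
    rintro (⟨d, j, x, y, z, h, rfl, rfl, rfl⟩ | ⟨rfl, rfl⟩ | ⟨rfl, rfl⟩ |
      ⟨rfl, rfl⟩)
    · simpa using hT.null_mul _ _ _ _ ((hg.isHom j).map_null x y z h)
    · simpa using (hT.null_zero _ _).2 rfl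
    · simpa using hT.null_swap_right _ _ _ ((hT.null_zero _ _).2 rfl)
    · simpa using hT.null_swap_left _ _ _ (hT.null_swap_right _ _ _ ((hT.null_zero _ _).2 rfl))

theorem hom_ext {P : Type w'} {T : PastureStr P} {g g' : Carrier F → P}
    (hg : (pastureStr F).IsHom T g) (hg' : (pastureStr F).IsHom T g')
    (h : ∀ j x, g (of F j x) = g' (of F j x)) : g = g' := by
  funext a
  induction a using Carrier.induction_on with
  | of j x => exact h j x
  | one => exact hg.map_one.trans hg'.map_one.symm
  | zero => exact hg.map_zero.trans hg'.map_zero.symm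
  | neg a ih => exact (hg.map_neg a).trans (ih ▸ (hg'.map_neg a).symm)
  | mul a b iha ihb => exact (hg.map_mul a b).trans (iha ▸ ihb ▸ (hg'.map_mul a b).symm)

variable (F) in
def cocone : Cocone F where
  pt := pasture F
  ι.app j := ⟨of F j, isHom_of j⟩
  ι.naturality _ _ f := PastureHom.ext' (funext (of_map f))

theorem isCompatible_cocone (s : Cocone F) : IsCompatible s.pt.str fun j => (s.ι.app j).toFun where
  isHom j := (s.ι.app j).isHom
  naturality f x := congrFun (congrArg PastureHom.toFun (s.w f)) x

def desc (s : Cocone F) : pasture F ⟶ s.pt :=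
  ⟨lift s.pt.isPasture (isCompatible_cocone s), isHom_lift _ _⟩

variable (F) in
def isColimit : IsColimit (cocone F) where
  desc := desc
  fac _ _ := PastureHom.ext' rfl
  uniq s m hm := PastureHom.ext' <| hom_ext m.isHom (desc s).isHom fun j x =>
    congrFun (congrArg PastureHom.toFun (hm j)) x

end PastureColimit

/-- **The category of pastures has all small colimits**: every functor from a
small category `J` into the category of pastures has a colimit. -/
theorem pastures_have_small_colimits (J : Type v) [CategoryTheory.SmallCategory J]
    (F : CategoryTheory.Functor J Pasture.{max u v}) :
    CategoryTheory.Limits.HasColimit F :=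
  ⟨⟨⟨PastureColimit.cocone F, PastureColimit.isColimit F⟩⟩⟩
end

section
/- Given pastures P, P₁, P₂ and morphisms of pastures f₁ : P₁ → P and f₂ : P₂ → P, the fibered product P₁ ×_P P₂ is a pasture: its nonzero elements form an abelian group under componentwise multiplication, its involution (a,b) ↦ (-a,-b) is well-defined, and its nullset satisfies the three axioms of a nullset. -/
universe u v w

variable {P P₁ P₂ : Type u}

/-- The underlying set of the fibered product `P₁ ×_P P₂`:
`{0} ∪ {(a,b) : a ∈ P₁^×, b ∈ P₂^×, f₁ a = f₂ b}`, with `none` playing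
the role of `0`. -/
def FibCarrier (S₁ : PastureStr P₁) (S₂ : PastureStr P₂)
    (f₁ : P₁ → P) (f₂ : P₂ → P) : Type u :=
  Option {p : P₁ × P₂ // p.1 ≠ S₁.zero ∧ p.2 ≠ S₂.zero ∧ f₁ p.1 = f₂ p.2}

/-- The pasture structure on the fibered product `P₁ ×_P P₂`: componentwise
multiplication with `0` absorbing, involution `(a,b) ↦ (-a,-b)` fixing `0`,
and nullset given by all permutations of `0+0+0=0`, `(a,b)+(-a,-b)+0=0`, and
componentwise relations for nonzero triples. -/
def fibStr (S : PastureStr P) (S₁ : PastureStr P₁) (S₂ : PastureStr P₂)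
    (hS₁ : S₁.IsPasture) (hS₂ : S₂.IsPasture) (f₁ : P₁ → P) (f₂ : P₂ → P)
    (hf₁ : S₁.IsHom S f₁) (hf₂ : S₂.IsHom S f₂) :
    PastureStr (FibCarrier S₁ S₂ f₁ f₂) where
  mul x y :=
    match x, y with
    | some a, some b =>
        some ⟨(S₁.mul a.1.1 b.1.1, S₂.mul a.1.2 b.1.2),
          hS₁.mul_ne_zero _ _ a.2.1 b.2.1,
          hS₂.mul_ne_zero _ _ a.2.2.1 b.2.2.1, by
            show f₁ (S₁.mul a.1.1 b.1.1) = f₂ (S₂.mul a.1.2 b.1.2)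
            rw [hf₁.map_mul, hf₂.map_mul, a.2.2.2, b.2.2.2]⟩
    | _, _ => none
  zero := none
  one := some ⟨(S₁.one, S₂.one), hS₁.one_ne_zero, hS₂.one_ne_zero, by
    show f₁ S₁.one = f₂ S₂.one
    rw [hf₁.map_one, hf₂.map_one]⟩
  neg x :=
    match x with
    | none => none
    | some a =>
        some ⟨(S₁.neg a.1.1, S₂.neg a.1.2),
          fun hc => a.2.1 (by
            have hc' : S₁.neg a.1.1 = S₁.zero := hc
            rw [← hS₁.neg_neg a.1.1, hc', hS₁.neg_zero]),
          fun hc => a.2.2.1 (by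
            have hc' : S₂.neg a.1.2 = S₂.zero := hc
            rw [← hS₂.neg_neg a.1.2, hc', hS₂.neg_zero]), by
            show f₁ (S₁.neg a.1.1) = f₂ (S₂.neg a.1.2)
            rw [hf₁.map_neg, hf₂.map_neg, a.2.2.2]⟩
  null x y z :=
    match x, y, z with
    | none, none, none => True
    | some a, some b, none => a.1.1 = S₁.neg b.1.1 ∧ a.1.2 = S₂.neg b.1.2
    | some a, none, some c => a.1.1 = S₁.neg c.1.1 ∧ a.1.2 = S₂.neg c.1.2
    | none, some b, some c => b.1.1 = S₁.neg c.1.1 ∧ b.1.2 = S₂.neg c.1.2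
    | some _, none, none => False
    | none, some _, none => False
    | none, none, some _ => False
    | some a, some b, some c =>
        S₁.null a.1.1 b.1.1 c.1.1 ∧ S₂.null a.1.2 b.1.2 c.1.2

/-!
The two projections of `P₁ ×_P P₂` to `P₁` and `P₂` are morphisms of pastures that jointly
embed it, and a triple is null in `P₁ ×_P P₂` exactly when both of its projections are null
(a nonzero element never has a zero coordinate). So every axiom of a pasture except the
existence of inverses is inherited from `P₁` and `P₂`. If `(a, b)` lies over `c`, then
`(a⁻¹, b⁻¹)` lies over `c⁻¹`, because `f₁ (a⁻¹)` and `f₂ (b⁻¹)` are both inverses of `c`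
in `P`, where inverses are unique.
-/
namespace PastureStr.IsPasture

variable {S : PastureStr P}

theorem mul_zero_s8 (hS : S.IsPasture) (a : P) : S.mul a S.zero = S.zero := by
  rw [hS.mul_comm, hS.zero_mul]

theorem zero_eq_neg_iff (hS : S.IsPasture) {a : P} : S.zero = S.neg a ↔ a = S.zero :=
  ⟨fun h => by rw [← hS.neg_neg a, ← h, hS.neg_zero], fun h => by rw [h, hS.neg_zero]⟩

theorem null_zero_mid_iff (hS : S.IsPasture) {a c : P} : S.null a S.zero c ↔ a = S.neg c :=
  ⟨fun h => (hS.null_zero a c).1 (hS.null_swap_right _ _ _ h),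
    fun h => hS.null_swap_right _ _ _ ((hS.null_zero a c).2 h)⟩

theorem null_zero_left_iff (hS : S.IsPasture) {b c : P} : S.null S.zero b c ↔ b = S.neg c :=
  ⟨fun h => hS.null_zero_mid_iff.1 (hS.null_swap_left _ _ _ h),
    fun h => hS.null_swap_left _ _ _ (hS.null_zero_mid_iff.2 h)⟩

theorem null_zero_zero_iff (hS : S.IsPasture) {a : P} :
    S.null a S.zero S.zero ↔ a = S.zero := by
  rw [hS.null_zero, hS.neg_zero]

theorem eq_of_mul_eq_one (hS : S.IsPasture) {a b c : P} (hb : S.mul a b = S.one)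
    (hc : S.mul a c = S.one) : b = c := by
  calc b = S.mul (S.mul a c) b := by rw [hc, hS.one_mul]
    _ = S.mul c (S.mul a b) := by rw [hS.mul_comm a c, hS.mul_assoc]
    _ = c := by rw [hb, hS.mul_comm, hS.one_mul]

theorem ne_zero_of_mul_eq_one (hS : S.IsPasture) {a b : P} (h : S.mul a b = S.one) :
    b ≠ S.zero := by
  rintro rfl
  exact hS.one_ne_zero (h.symm.trans (hS.mul_zero_s8 a))

theorem of_injective_pair {Q : Type*} {T : PastureStr Q}
    {S₁ : PastureStr P₁} {S₂ : PastureStr P₂} (hS₁ : S₁.IsPasture) (hS₂ : S₂.IsPasture)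
    {g₁ : Q → P₁} {g₂ : Q → P₂} (hg₁ : T.IsHom S₁ g₁) (hg₂ : T.IsHom S₂ g₂)
    (hinj : ∀ x y, g₁ x = g₁ y → g₂ x = g₂ y → x = y)
    (hnull : ∀ x y z, S₁.null (g₁ x) (g₁ y) (g₁ z) → S₂.null (g₂ x) (g₂ y) (g₂ z) →
      T.null x y z)
    (hzero : ∀ x, g₁ x = S₁.zero → x = T.zero)
    (hinv : ∀ x, x ≠ T.zero → ∃ y, T.mul x y = T.one) :
    T.IsPasture where
  mul_comm x y := hinj _ _ (by simp only [hg₁.map_mul, hS₁.mul_comm])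
    (by simp only [hg₂.map_mul, hS₂.mul_comm])
  mul_assoc x y z := hinj _ _ (by simp only [hg₁.map_mul, hS₁.mul_assoc])
    (by simp only [hg₂.map_mul, hS₂.mul_assoc])
  one_mul x := hinj _ _ (by rw [hg₁.map_mul, hg₁.map_one, hS₁.one_mul])
    (by rw [hg₂.map_mul, hg₂.map_one, hS₂.one_mul])
  zero_mul x := hinj _ _ (by rw [hg₁.map_mul, hg₁.map_zero, hS₁.zero_mul])
    (by rw [hg₂.map_mul, hg₂.map_zero, hS₂.zero_mul])
  one_ne_zero h := hS₁.one_ne_zero (by rw [← hg₁.map_one, h, hg₁.map_zero])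
  mul_ne_zero x y hx hy h := by
    have hx₁ : g₁ x ≠ S₁.zero := fun h' => hx (hzero x h')
    have hy₁ : g₁ y ≠ S₁.zero := fun h' => hy (hzero y h')
    exact hS₁.mul_ne_zero _ _ hx₁ hy₁ (by rw [← hg₁.map_mul, h, hg₁.map_zero])
  exists_inv := hinv
  neg_neg x := hinj _ _ (by rw [hg₁.map_neg, hg₁.map_neg, hS₁.neg_neg])
    (by rw [hg₂.map_neg, hg₂.map_neg, hS₂.neg_neg])
  neg_zero := hinj _ _ (by rw [hg₁.map_neg, hg₁.map_zero, hS₁.neg_zero])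
    (by rw [hg₂.map_neg, hg₂.map_zero, hS₂.neg_zero])
  null_swap_left x y z h := hnull _ _ _
    (hS₁.null_swap_left _ _ _ (hg₁.map_null _ _ _ h))
    (hS₂.null_swap_left _ _ _ (hg₂.map_null _ _ _ h))
  null_swap_right x y z h := hnull _ _ _
    (hS₁.null_swap_right _ _ _ (hg₁.map_null _ _ _ h))
    (hS₂.null_swap_right _ _ _ (hg₂.map_null _ _ _ h))
  null_mul d x y z h := hnull _ _ _
    (by simpa only [hg₁.map_mul] using hS₁.null_mul _ _ _ _ (hg₁.map_null _ _ _ h))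
    (by simpa only [hg₂.map_mul] using hS₂.null_mul _ _ _ _ (hg₂.map_null _ _ _ h))
  null_zero x y := by
    refine ⟨fun h => hinj _ _ ?_ ?_, fun h => hnull _ _ _ ?_ ?_⟩
    · simpa only [hg₁.map_neg, hg₁.map_zero, hS₁.null_zero] using hg₁.map_null _ _ _ h
    · simpa only [hg₂.map_neg, hg₂.map_zero, hS₂.null_zero] using hg₂.map_null _ _ _ h
    · rw [h, hg₁.map_zero, hg₁.map_neg, hS₁.null_zero]
    · rw [h, hg₂.map_zero, hg₂.map_neg, hS₂.null_zero]

end PastureStr.IsPasture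

theorem PastureStr.IsHom.map_mul_eq_one {S : PastureStr P} {S₁ : PastureStr P₁} {f : P₁ → P}
    (hf : S₁.IsHom S f) {a b : P₁} (h : S₁.mul a b = S₁.one) : S.mul (f a) (f b) = S.one := by
  rw [← hf.map_mul, h, hf.map_one]

namespace FibCarrier

variable {S₁ : PastureStr P₁} {S₂ : PastureStr P₂} {f₁ : P₁ → P} {f₂ : P₂ → P}

def fst : FibCarrier S₁ S₂ f₁ f₂ → P₁
  | none => S₁.zero
  | some a => a.1.1

def snd : FibCarrier S₁ S₂ f₁ f₂ → P₂
  | none => S₂.zero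
  | some a => a.1.2

theorem ext {x y : FibCarrier S₁ S₂ f₁ f₂} (h₁ : x.fst = y.fst) (h₂ : x.snd = y.snd) :
    x = y := by
  rcases x with _ | a <;> rcases y with _ | b
  · rfl
  · exact absurd h₁.symm b.2.1
  · exact absurd h₁ a.2.1
  · exact congrArg some (Subtype.ext (Prod.ext h₁ h₂))

theorem eq_none_of_fst_eq_zero {x : FibCarrier S₁ S₂ f₁ f₂} (h : x.fst = S₁.zero) :
    x = none := by
  rcases x with _ | a
  · rfl
  · exact absurd h a.2.1

end FibCarrier

section FiberedProduct

variable {S : PastureStr P} {S₁ : PastureStr P₁} {S₂ : PastureStr P₂}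
  {hS₁ : S₁.IsPasture} {hS₂ : S₂.IsPasture} {f₁ : P₁ → P} {f₂ : P₂ → P}
  {hf₁ : S₁.IsHom S f₁} {hf₂ : S₂.IsHom S f₂}

theorem fibStr_null_iff {x y z : FibCarrier S₁ S₂ f₁ f₂} :
    (fibStr S S₁ S₂ hS₁ hS₂ f₁ f₂ hf₁ hf₂).null x y z ↔
      S₁.null x.fst y.fst z.fst ∧ S₂.null x.snd y.snd z.snd := by
  rcases x with _ | a <;> rcases y with _ | b <;> rcases z with _ | c
  · exact iff_of_true trivial ⟨hS₁.null_zero_zero_iff.2 rfl, hS₂.null_zero_zero_iff.2 rfl⟩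
  · exact iff_of_false id fun h => c.2.1 (hS₁.zero_eq_neg_iff.1 (hS₁.null_zero_left_iff.1 h.1))
  · exact iff_of_false id fun h => b.2.1 (hS₁.zero_eq_neg_iff.1 ((hS₁.null_zero _ _).1 h.1))
  · exact (and_congr hS₁.null_zero_left_iff hS₂.null_zero_left_iff).symm
  · exact iff_of_false id fun h => a.2.1 (hS₁.null_zero_zero_iff.1 h.1)
  · exact (and_congr hS₁.null_zero_mid_iff hS₂.null_zero_mid_iff).symm
  · exact (and_congr (hS₁.null_zero a.1.1 b.1.1) (hS₂.null_zero a.1.2 b.1.2)).symm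
  · exact Iff.rfl

theorem fibStr_isHom_fst : (fibStr S S₁ S₂ hS₁ hS₂ f₁ f₂ hf₁ hf₂).IsHom S₁ FibCarrier.fst where
  map_mul x y := by
    rcases x with _ | a
    · exact (hS₁.zero_mul _).symm
    rcases y with _ | b
    · exact (hS₁.mul_zero_s8 _).symm
    · rfl
  map_zero := rfl
  map_one := rfl
  map_neg x := by
    rcases x with _ | a
    · exact hS₁.neg_zero.symm
    · rfl
  map_null _ _ _ h := (fibStr_null_iff.1 h).1

theorem fibStr_isHom_snd : (fibStr S S₁ S₂ hS₁ hS₂ f₁ f₂ hf₁ hf₂).IsHom S₂ FibCarrier.snd where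
  map_mul x y := by
    rcases x with _ | a
    · exact (hS₂.zero_mul _).symm
    rcases y with _ | b
    · exact (hS₂.mul_zero_s8 _).symm
    · rfl
  map_zero := rfl
  map_one := rfl
  map_neg x := by
    rcases x with _ | a
    · exact hS₂.neg_zero.symm
    · rfl
  map_null _ _ _ h := (fibStr_null_iff.1 h).2

theorem fibStr_exists_inv (hS : S.IsPasture) (x : FibCarrier S₁ S₂ f₁ f₂)
    (hx : x ≠ (fibStr S S₁ S₂ hS₁ hS₂ f₁ f₂ hf₁ hf₂).zero) :
    ∃ y, (fibStr S S₁ S₂ hS₁ hS₂ f₁ f₂ hf₁ hf₂).mul x y =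
      (fibStr S S₁ S₂ hS₁ hS₂ f₁ f₂ hf₁ hf₂).one := by
  rcases x with _ | ⟨⟨a₁, a₂⟩, ha₁, ha₂, ha⟩
  · exact absurd rfl hx
  obtain ⟨b₁, hb₁⟩ := hS₁.exists_inv a₁ ha₁
  obtain ⟨b₂, hb₂⟩ := hS₂.exists_inv a₂ ha₂
  have hb : f₁ b₁ = f₂ b₂ :=
    hS.eq_of_mul_eq_one (hf₁.map_mul_eq_one hb₁) (ha ▸ hf₂.map_mul_eq_one hb₂)
  exact ⟨some ⟨(b₁, b₂), hS₁.ne_zero_of_mul_eq_one hb₁, hS₂.ne_zero_of_mul_eq_one hb₂, hb⟩,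
    FibCarrier.ext hb₁ hb₂⟩

end FiberedProduct

/-- **The fibered product of pastures is a pasture**: the structure
`fibStr` on `P₁ ×_P P₂` satisfies all the axioms of a pasture. -/
theorem fibered_product_is_pasture
    (S : PastureStr P) (S₁ : PastureStr P₁) (S₂ : PastureStr P₂)
    (hS : S.IsPasture) (hS₁ : S₁.IsPasture) (hS₂ : S₂.IsPasture)
    (f₁ : P₁ → P) (f₂ : P₂ → P) (hf₁ : S₁.IsHom S f₁) (hf₂ : S₂.IsHom S f₂) :
    (fibStr S S₁ S₂ hS₁ hS₂ f₁ f₂ hf₁ hf₂).IsPasture :=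
  .of_injective_pair hS₁ hS₂ fibStr_isHom_fst fibStr_isHom_snd
    (fun _ _ => FibCarrier.ext) (fun _ _ _ h₁ h₂ => fibStr_null_iff.2 ⟨h₁, h₂⟩)
    (fun _ => FibCarrier.eq_none_of_fst_eq_zero) (fibStr_exists_inv hS)
end
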